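/- arXiv:2203.11189 — 3 statements merged into one kernel-verified Lean document; each statement's English description precedes it below -/
import Mathlib

section
/- Let σ : [0,h] → ℝ^m be the polynomial (of degree s in the scaled variable) satisfying σ̇(ch) = Σ_{j=0}^{s−1} P_j(c) γ_j(σ) for c ∈ [0,1] with σ(0) = y_0, where γ_j(σ) = ∫₀¹ P_j(τ) f(σ(τh)) dτ. Suppose f(y) = J∇H(y) with J a constant skew-symmetric m×m matrix (Jᵀ = −J) and H : ℝ^m → ℝ continuously differentiable. Then H(σ(h)) = H(σ(0)), i.e., the method conserves the Hamiltonian H. -/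
/-!
Along `g(t) = σ(t h)` the chain rule gives `d/dt H(g t) = ⟪∇H(g t), h Σⱼ Pⱼ(t) γⱼ⟫`, and
`γⱼ = J Gⱼ` with `Gⱼ = ∫₀¹ Pⱼ(τ) ∇H(g τ) dτ`. Integrating over `[0, 1]` therefore produces
`h Σⱼ ⟪Gⱼ, J Gⱼ⟫`, and every term vanishes because `J` is skew-symmetric.
-/

open Polynomial intervalIntegral Matrix
open scoped RealInnerProductSpace

theorem Matrix.dotProduct_mulVec_self_eq_zero_of_transpose_eq_neg {R n : Type*} [CommRing R]
    [NoZeroDivisors R] [CharZero R] [Fintype n] {J : Matrix n n R} (hJ : Jᵀ = -J) (x : n → R) :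
    x ⬝ᵥ J *ᵥ x = 0 :=
  self_eq_neg.mp <| calc
    x ⬝ᵥ J *ᵥ x = Jᵀ *ᵥ x ⬝ᵥ x := by rw [dotProduct_mulVec, mulVec_transpose]
    _ = -(x ⬝ᵥ J *ᵥ x) := by rw [hJ, neg_mulVec, neg_dotProduct, dotProduct_comm]

theorem Matrix.inner_toEuclideanCLM_self_eq_zero_of_transpose_eq_neg {n : Type*} [Fintype n]
    [DecidableEq n] {J : Matrix n n ℝ} (hJ : Jᵀ = -J) (v : EuclideanSpace ℝ n) :
    ⟪v, toEuclideanCLM (𝕜 := ℝ) J v⟫ = 0 := by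
  rw [inner_toEuclideanCLM]
  exact dotProduct_mulVec_self_eq_zero_of_transpose_eq_neg hJ _

section
variable {E : Type*} [NormedAddCommGroup E] [InnerProductSpace ℝ E] [CompleteSpace E]

theorem hasDerivAt_comp_inner_gradient {H : E → ℝ} {g : ℝ → E} {t : ℝ} {v : E}
    (hH : DifferentiableAt ℝ H (g t)) (hg : HasDerivAt g v t) :
    HasDerivAt (fun t => H (g t)) ⟪gradient H (g t), v⟫ t := by
  rw [inner_gradient_left]
  exact hH.hasFDerivAt.comp_hasDerivAt t hg

theorem ContDiff.continuous_gradient {H : E → ℝ} (hH : ContDiff ℝ 1 H) :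
    Continuous (gradient H) :=
  (InnerProductSpace.toDual ℝ E).symm.continuous.comp (hH.continuous_fderiv one_ne_zero)

variable {L : E →L[ℝ] E} {a b : ℝ}

theorem integral_mul_inner_integral_smul_apply_eq_zero (hL : ∀ v, ⟪v, L v⟫ = 0) {p : ℝ → ℝ}
    {u : ℝ → E} (hpu : IntervalIntegrable (fun t => p t • u t) MeasureTheory.volume a b) :
    ∫ t in a..b, p t * ⟪u t, ∫ τ in a..b, p τ • L (u τ)⟫ = 0 := by
  set G := ∫ τ in a..b, p τ • u τ
  have hLG : ∫ τ in a..b, p τ • L (u τ) = L G := by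
    simp_rw [← L.map_smul]
    exact L.intervalIntegral_comp_comm hpu
  calc ∫ t in a..b, p t * ⟪u t, ∫ τ in a..b, p τ • L (u τ)⟫
      = ∫ t in a..b, ⟪p t • u t, L G⟫ := by simp_rw [hLG, real_inner_smul_left]
    _ = ⟪G, L G⟫ := ((innerSL ℝ).flip (L G)).intervalIntegral_comp_comm hpu
    _ = 0 := hL G

theorem apply_eq_apply_of_hasDerivAt_sum_smul_integral {ι : Type*} (S : Finset ι)
    {p : ι → ℝ → ℝ} (hp : ∀ i, Continuous (p i)) {H : E → ℝ} (hH : ContDiff ℝ 1 H)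
    (hL : ∀ v, ⟪v, L v⟫ = 0) {g : ℝ → E}
    (hg : ∀ t ∈ Set.uIcc a b,
      HasDerivAt g (∑ i ∈ S, p i t • ∫ τ in a..b, p i τ • L (gradient H (g τ))) t) :
    H (g b) = H (g a) := by
  set γ := fun i => ∫ τ in a..b, p i τ • L (gradient H (g τ))
  have hu : ContinuousOn (fun t => gradient H (g t)) (Set.uIcc a b) :=
    hH.continuous_gradient.comp_continuousOn fun t ht => (hg t ht).continuousAt.continuousWithinAt
  have hftc : ∫ t in a..b, ⟪gradient H (g t), ∑ i ∈ S, p i t • γ i⟫ = H (g b) - H (g a) :=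
    integral_eq_sub_of_hasDerivAt
      (fun t ht => hasDerivAt_comp_inner_gradient (hH.differentiable one_ne_zero _) (hg t ht))
      (hu.inner (continuous_finsetSum S fun i _ => (hp i).smul continuous_const).continuousOn
        |>.intervalIntegrable)
  have hterm : ∀ i ∈ S, IntervalIntegrable (fun t => p i t * ⟪gradient H (g t), γ i⟫)
      MeasureTheory.volume a b := fun i _ =>
    ((hp i).continuousOn.mul (hu.inner continuousOn_const)).intervalIntegrable
  simp_rw [inner_sum, real_inner_smul_right] at hftc
  rw [integral_finsetSum hterm, Finset.sum_eq_zero fun i _ =>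
    integral_mul_inner_integral_smul_apply_eq_zero hL
      ((hp i).continuousOn.smul hu).intervalIntegrable] at hftc
  linarith
end

theorem hbvm_energy_conservation_general
    {m s : ℕ}
    (P : ℕ → Polynomial ℝ)
    (h : ℝ)
    (H : EuclideanSpace ℝ (Fin m) → ℝ) (hH : ContDiff ℝ 1 H)
    (J : Matrix (Fin m) (Fin m) ℝ) (hJ : Jᵀ = -J)
    (f : EuclideanSpace ℝ (Fin m) → EuclideanSpace ℝ (Fin m))
    (hf : ∀ y, f y = (EuclideanSpace.equiv (Fin m) ℝ).symm
      (J.mulVec ((EuclideanSpace.equiv (Fin m) ℝ) (gradient H y))))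
    (σ : ℝ → EuclideanSpace ℝ (Fin m))
    (γ : ℕ → EuclideanSpace ℝ (Fin m))
    (hγ : ∀ j, γ j = ∫ τ in (0:ℝ)..1, (P j).eval τ • f (σ (τ * h)))
    (hσ : ∀ c ∈ Set.Icc (0:ℝ) 1,
      HasDerivAt σ (∑ j : Fin s, (P (j : ℕ)).eval c • γ (j : ℕ)) (c * h)) :
    H (σ h) = H (σ 0) := by
  have hfJ : ∀ y, f y = toEuclideanCLM (𝕜 := ℝ) J (gradient H y) := hf
  -- the step size is absorbed into the operator `h • J`, which is still skew
  have hhγ : ∀ j, h • γ j =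
      ∫ τ in (0:ℝ)..1, (P j).eval τ • (h • toEuclideanCLM (𝕜 := ℝ) J) (gradient H (σ (τ * h))) := by
    intro j
    simp_rw [hγ, hfJ, ← integral_smul, FunLike.coe_smul, Pi.smul_apply, smul_comm h]
  have hderiv : ∀ t ∈ Set.uIcc (0:ℝ) 1, HasDerivAt (fun t => σ (t * h))
      (∑ j : Fin s, (P j).eval t • ∫ τ in (0:ℝ)..1,
        (P j).eval τ • (h • toEuclideanCLM (𝕜 := ℝ) J) (gradient H (σ (τ * h)))) t := by
    intro t ht
    rw [Set.uIcc_of_le zero_le_one] at ht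
    have hchain := (hσ t ht).scomp t (hasDerivAt_mul_const h)
    simp_rw [Finset.smul_sum, smul_comm h, hhγ] at hchain
    exact hchain
  simpa using apply_eq_apply_of_hasDerivAt_sum_smul_integral Finset.univ
    (p := fun j : Fin s => (P j).eval) (fun j => (P j).continuous) hH
    (fun v => by rw [FunLike.coe_smul, Pi.smul_apply, inner_smul_right,
      inner_toEuclideanCLM_self_eq_zero_of_transpose_eq_neg hJ, mul_zero]) hderiv

/-- Energy conservation of the continuous-stage method HBVM(∞,s): if
`f = J ∇H` with `J` skew-symmetric, and `σ` is the polynomial approximation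
whose scaled derivative is the truncated Legendre expansion of `f ∘ σ`,
then `H(σ(h)) = H(σ(0))`. -/
theorem hbvm_energy_conservation
    {m s : ℕ}
    (P : ℕ → Polynomial ℝ)
    (hdeg : ∀ j, (P j).natDegree = j)
    (hlead : ∀ j, 0 < (P j).leadingCoeff)
    (horth : ∀ i j, ∫ x in (0:ℝ)..1, (P i).eval x * (P j).eval x
              = if i = j then 1 else 0)
    (h : ℝ) (hh : 0 < h)
    (H : EuclideanSpace ℝ (Fin m) → ℝ) (hH : ContDiff ℝ 1 H)
    (J : Matrix (Fin m) (Fin m) ℝ) (hJ : Jᵀ = -J)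
    (f : EuclideanSpace ℝ (Fin m) → EuclideanSpace ℝ (Fin m))
    (hf : ∀ y, f y = (EuclideanSpace.equiv (Fin m) ℝ).symm
      (J.mulVec ((EuclideanSpace.equiv (Fin m) ℝ) (gradient H y))))
    (y₀ : EuclideanSpace ℝ (Fin m))
    (σ : ℝ → EuclideanSpace ℝ (Fin m))
    (hσ0 : σ 0 = y₀)
    (γ : ℕ → EuclideanSpace ℝ (Fin m))
    (hγ : ∀ j, γ j = ∫ τ in (0:ℝ)..1, (P j).eval τ • f (σ (τ * h)))
    (hσ : ∀ c ∈ Set.Icc (0:ℝ) 1,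
      HasDerivAt σ (∑ j : Fin s, (P (j : ℕ)).eval c • γ (j : ℕ)) (c * h)) :
    H (σ h) = H (σ 0) :=
  hbvm_energy_conservation_general P h H hH J hJ f hf σ γ hγ hσ
end

section
/- With the notation of the k-node Gauss–Legendre quadrature on [0,1] (k ≥ s), define 𝒫_s, Ω as before and ℐ_s ∈ ℝ^{k×s} with entries (ℐ_s)_{ij} = ∫₀^{c_i} P_{j−1}(x) dx. Then 𝒫_sᵀ Ω ℐ_s = X_s, where X_s is the s×s matrix with entries (X_s)_{ij} = ∫₀¹ P_{i−1}(ξ)(∫₀^ξ P_{j−1}(x) dx) dξ. -/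
/-! The entry `(i, j)` of `𝒫_sᵀ Ω ℐ_s` is the quadrature sum `∑ₗ bₗ q(cₗ)` of the polynomial
`q = P_i · ∫₀^· P_j`, of degree `i + j + 1 ≤ 2s - 1 < 2k`; exactness of the quadrature turns it
into `∫₀¹ q`, which is the entry `(i, j)` of `X_s`. -/

open Polynomial intervalIntegral Matrix

namespace Polynomial

noncomputable def antideriv (p : ℝ[X]) : ℝ[X] :=
  ∑ n ∈ Finset.range (p.natDegree + 1), C (p.coeff n / (n + 1)) * X ^ (n + 1)

theorem derivative_antideriv (p : ℝ[X]) : derivative (antideriv p) = p := by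
  rw [antideriv, map_sum]
  conv_rhs => rw [p.as_sum_range' (p.natDegree + 1) (Nat.lt_succ_self _)]
  refine Finset.sum_congr rfl fun n _ => ?_
  have hn : ((n : ℝ) + 1) ≠ 0 := by positivity
  rw [derivative_C_mul, derivative_X_pow, ← mul_assoc, ← C_mul]
  push_cast
  rw [div_mul_cancel₀ _ hn, C_mul_X_pow_eq_monomial]

theorem eval_zero_antideriv (p : ℝ[X]) : (antideriv p).eval 0 = 0 := by
  simp [antideriv, eval_finsetSum]

theorem natDegree_antideriv_le (p : ℝ[X]) : (antideriv p).natDegree ≤ p.natDegree + 1 := by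
  refine natDegree_sum_le_of_forall_le _ _ fun n hn => (natDegree_C_mul_le _ _).trans ?_
  rw [natDegree_X_pow]
  exact Nat.succ_le_succ (Nat.lt_succ_iff.mp (Finset.mem_range.mp hn))

theorem integral_eval_eq_eval_antideriv (p : ℝ[X]) (t : ℝ) :
    ∫ x in (0:ℝ)..t, p.eval x = (antideriv p).eval t := by
  have hderiv : ∀ x ∈ Set.uIcc (0:ℝ) t, HasDerivAt (antideriv p).eval (p.eval x) x := by
    intro x _
    simpa only [derivative_antideriv] using (antideriv p).hasDerivAt x
  rw [integral_eq_sub_of_hasDerivAt hderiv (p.continuous.intervalIntegrable _ _),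
    eval_zero_antideriv, sub_zero]

end Polynomial

theorem sum_mul_integral_eq_integral_mul_integral {k : ℕ} (b c : Fin k → ℝ)
    (hexact : ∀ p : ℝ[X], p.degree < 2 * k →
      ∑ i : Fin k, b i * p.eval (c i) = ∫ x in (0:ℝ)..1, p.eval x)
    (p q : ℝ[X]) (hpq : p.natDegree + q.natDegree + 1 < 2 * k) :
    ∑ l : Fin k, p.eval (c l) * b l * ∫ x in (0:ℝ)..(c l), q.eval x
      = ∫ ξ in (0:ℝ)..1, p.eval ξ * ∫ x in (0:ℝ)..ξ, q.eval x := by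
  have hdeg : (p * antideriv q).degree < 2 * k := by
    refine degree_le_natDegree.trans_lt ?_
    have hmul := natDegree_mul_le (p := p) (q := antideriv q)
    have hantideriv := natDegree_antideriv_le q
    exact_mod_cast (by omega : (p * antideriv q).natDegree < 2 * k)
  calc ∑ l : Fin k, p.eval (c l) * b l * ∫ x in (0:ℝ)..(c l), q.eval x
      = ∑ l : Fin k, b l * (p * antideriv q).eval (c l) := by
        refine Finset.sum_congr rfl fun l _ => ?_
        rw [integral_eval_eq_eval_antideriv, eval_mul]
        ring
    _ = ∫ ξ in (0:ℝ)..1, (p * antideriv q).eval ξ := hexact _ hdeg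
    _ = ∫ ξ in (0:ℝ)..1, p.eval ξ * ∫ x in (0:ℝ)..ξ, q.eval x := by
        simp only [eval_mul, integral_eval_eq_eval_antideriv]

theorem gauss_discrete_X_general
    (s k : ℕ) (hks : s ≤ k)
    (P : ℕ → Polynomial ℝ)
    (hdeg : ∀ j, (P j).natDegree = j)
    (b c : Fin k → ℝ)
    (hexact : ∀ p : Polynomial ℝ, p.degree < 2 * k →
      ∑ i : Fin k, b i * p.eval (c i) = ∫ x in (0:ℝ)..1, p.eval x) :
    (Matrix.of fun (i : Fin k) (j : Fin s) => (P (j : ℕ)).eval (c i))ᵀ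
      * Matrix.diagonal b
      * (Matrix.of fun (i : Fin k) (j : Fin s) =>
          ∫ x in (0:ℝ)..(c i), (P (j : ℕ)).eval x)
    = Matrix.of (fun (i : Fin s) (j : Fin s) =>
        ∫ ξ in (0:ℝ)..1,
          (P (i : ℕ)).eval ξ * (∫ x in (0:ℝ)..ξ, (P (j : ℕ)).eval x)) := by
  ext i j
  simp only [mul_apply, transpose_apply, of_apply, diagonal_apply, mul_ite, mul_zero,
    Finset.sum_ite_eq', Finset.mem_univ, if_true]
  refine sum_mul_integral_eq_integral_mul_integral b c hexact _ _ ?_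
  rw [hdeg, hdeg]
  omega

/-- For the `k`-node Gauss–Legendre quadrature on `[0,1]` (exact for degree ≤ 2k−1,
`k ≥ s`), one has `𝒫_sᵀ Ω ℐ_s = X_s`, where `(ℐ_s)_{ij} = ∫₀^{cᵢ} P_{j−1}` and
`(X_s)_{ij} = ∫₀¹ P_{i−1}(ξ)(∫₀^ξ P_{j−1}) dξ`. -/
theorem gauss_discrete_X
    (s k : ℕ) (hks : s ≤ k)
    (P : ℕ → Polynomial ℝ)
    (hdeg : ∀ j, (P j).natDegree = j)
    (hlead : ∀ j, 0 < (P j).leadingCoeff)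
    (horth : ∀ i j, ∫ x in (0:ℝ)..1, (P i).eval x * (P j).eval x
              = if i = j then 1 else 0)
    (b c : Fin k → ℝ)
    (hb : ∀ i, 0 < b i) (hc : ∀ i, c i ∈ Set.Ioo (0:ℝ) 1)
    (hexact : ∀ p : Polynomial ℝ, p.degree < 2 * k →
      ∑ i : Fin k, b i * p.eval (c i) = ∫ x in (0:ℝ)..1, p.eval x) :
    (Matrix.of fun (i : Fin k) (j : Fin s) => (P (j : ℕ)).eval (c i))ᵀ
      * Matrix.diagonal b
      * (Matrix.of fun (i : Fin k) (j : Fin s) =>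
          ∫ x in (0:ℝ)..(c i), (P (j : ℕ)).eval x)
    = Matrix.of (fun (i : Fin s) (j : Fin s) =>
        ∫ ξ in (0:ℝ)..1,
          (P (i : ℕ)).eval ξ * (∫ x in (0:ℝ)..ξ, (P (j : ℕ)).eval x)) :=
  gauss_discrete_X_general s k hks P hdeg b c hexact
end

section
/- With the k-node Gauss–Legendre quadrature (exact for degree ≤ 2k−1, k ≥ s) and matrices ℐ_s, 𝒫_s, Ω, X_s as defined, the RKN Butcher matrix Ā := ℐ_s X_s 𝒫_sᵀ Ω has entries Ā_{ij} = b_j ā_s(c_i, c_j), where ā_s(c,τ) = ∫₀¹ a_s(c,ξ) a_s(ξ,τ) dξ and a_s(c,τ) = Σ_{l=0}^{s−1}(∫₀^c P_l) P_l(τ). -/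
/-! Both sides equal `b_j ∑_{l,m} (∫₀^{c_i} P_l) X_{lm} P_m(c_j)`: expanding the product of the
two separable kernels in `ā_s(c_i, c_j) = ∫₀¹ a_s(c_i,ξ) a_s(ξ,c_j) dξ` and integrating term by
term produces exactly the entries of `X_s`. -/

open Polynomial intervalIntegral Matrix

theorem Matrix.mul_mul_transpose_mul_diagonal_apply {m n p R : Type*} [Fintype n] [Fintype p]
    [DecidableEq p] [CommSemiring R] (A : Matrix m n R) (X : Matrix n n R) (B : Matrix p n R)
    (d : p → R) (i : m) (j : p) :
    (A * X * Bᵀ * diagonal d) i j = d j * ∑ l, ∑ l', A i l * X l l' * B j l' := by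
  rw [mul_diagonal]
  simp only [mul_apply, transpose_apply, Finset.sum_mul, Finset.mul_sum]
  rw [Finset.sum_comm]
  exact Finset.sum_congr rfl fun _ _ => Finset.sum_congr rfl fun _ _ => mul_comm _ _

theorem intervalIntegral.integral_sum_mul_sum {ι κ : Type*} [Fintype ι] [Fintype κ]
    {f : ι → ℝ → ℝ} {g : κ → ℝ → ℝ} {a b : ℝ}
    (hfg : ∀ l m, IntervalIntegrable (fun ξ => f l ξ * g m ξ) MeasureTheory.volume a b)
    (α : ι → ℝ) (β : κ → ℝ) :
    ∫ ξ in a..b, (∑ l, α l * f l ξ) * (∑ m, g m ξ * β m)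
      = ∑ l, ∑ m, α l * (∫ ξ in a..b, f l ξ * g m ξ) * β m := by
  have hexpand : ∀ ξ, (∑ l, α l * f l ξ) * (∑ m, g m ξ * β m)
      = ∑ l, ∑ m, α l * β m * (f l ξ * g m ξ) := fun ξ => by
    rw [Finset.sum_mul_sum]
    exact Finset.sum_congr rfl fun _ _ => Finset.sum_congr rfl fun _ _ => by ring
  simp only [hexpand]
  have hterm (l : ι) (m : κ) :
      IntervalIntegrable (fun ξ => α l * β m * (f l ξ * g m ξ)) MeasureTheory.volume a b :=
    (hfg l m).const_mul _
  rw [integral_finsetSum fun l _ => by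
    simpa only [Finset.sum_fn] using IntervalIntegrable.sum Finset.univ fun m _ => hterm l m]
  refine Finset.sum_congr rfl fun l _ => ?_
  rw [integral_finsetSum fun m _ => hterm l m]
  exact Finset.sum_congr rfl fun m _ => by rw [integral_const_mul]; ring

theorem hbvm_rkn_butcher_entries_general
    (s k : ℕ)
    (P : ℕ → Polynomial ℝ)
    (b c : Fin k → ℝ)
    (a : ℝ → ℝ → ℝ)
    (ha : ∀ x τ, a x τ =
      ∑ l : Fin s, (∫ u in (0:ℝ)..x, (P (l : ℕ)).eval u) * (P (l : ℕ)).eval τ)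
    (abar : ℝ → ℝ → ℝ)
    (habar : ∀ x τ, abar x τ = ∫ ξ in (0:ℝ)..1, a x ξ * a ξ τ)
    (X : Matrix (Fin s) (Fin s) ℝ)
    (hX : ∀ i j : Fin s, X i j =
      ∫ ξ in (0:ℝ)..1, (P (i : ℕ)).eval ξ * (∫ x in (0:ℝ)..ξ, (P (j : ℕ)).eval x)) :
    ∀ i j : Fin k,
      ((Matrix.of fun (i : Fin k) (l : Fin s) =>
          ∫ x in (0:ℝ)..(c i), (P (l : ℕ)).eval x)
        * X
        * (Matrix.of fun (i : Fin k) (l : Fin s) => (P (l : ℕ)).eval (c i))ᵀ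
        * Matrix.diagonal b) i j
      = b j * abar (c i) (c j) := by
  intro i j
  have hprimitive (m : ℕ) : Continuous fun ξ => ∫ u in (0:ℝ)..ξ, (P m).eval u :=
    continuous_primitive (fun _ _ => (P m).continuous.intervalIntegrable _ _) 0
  rw [mul_mul_transpose_mul_diagonal_apply, habar]
  simp only [ha, of_apply, hX]
  rw [integral_sum_mul_sum (f := fun (l : Fin s) ξ => (P l).eval ξ)
    (g := fun (m : Fin s) ξ => ∫ u in (0:ℝ)..ξ, (P m).eval u) fun l m =>
    ((P (l : ℕ)).continuous.mul (hprimitive m)).intervalIntegrable 0 1]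

/-- The RKN Butcher matrix `Ā = ℐ_s X_s 𝒫_sᵀ Ω` has entries
`Ā_{ij} = b_j ā_s(c_i, c_j)`, where `ā_s(c,τ) = ∫₀¹ a_s(c,ξ) a_s(ξ,τ) dξ`. -/
theorem hbvm_rkn_butcher_entries
    (s k : ℕ) (hks : s ≤ k)
    (P : ℕ → Polynomial ℝ)
    (hdeg : ∀ j, (P j).natDegree = j)
    (hlead : ∀ j, 0 < (P j).leadingCoeff)
    (horth : ∀ i j, ∫ x in (0:ℝ)..1, (P i).eval x * (P j).eval x
              = if i = j then 1 else 0)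
    (b c : Fin k → ℝ)
    (hb : ∀ i, 0 < b i) (hc : ∀ i, c i ∈ Set.Ioo (0:ℝ) 1)
    (hexact : ∀ p : Polynomial ℝ, p.degree < 2 * k →
      ∑ i : Fin k, b i * p.eval (c i) = ∫ x in (0:ℝ)..1, p.eval x)
    (a : ℝ → ℝ → ℝ)
    (ha : ∀ x τ, a x τ =
      ∑ l : Fin s, (∫ u in (0:ℝ)..x, (P (l : ℕ)).eval u) * (P (l : ℕ)).eval τ)
    (abar : ℝ → ℝ → ℝ)
    (habar : ∀ x τ, abar x τ = ∫ ξ in (0:ℝ)..1, a x ξ * a ξ τ)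
    (X : Matrix (Fin s) (Fin s) ℝ)
    (hX : ∀ i j : Fin s, X i j =
      ∫ ξ in (0:ℝ)..1, (P (i : ℕ)).eval ξ * (∫ x in (0:ℝ)..ξ, (P (j : ℕ)).eval x)) :
    ∀ i j : Fin k,
      ((Matrix.of fun (i : Fin k) (l : Fin s) =>
          ∫ x in (0:ℝ)..(c i), (P (l : ℕ)).eval x)
        * X
        * (Matrix.of fun (i : Fin k) (l : Fin s) => (P (l : ℕ)).eval (c i))ᵀ
        * Matrix.diagonal b) i j
      = b j * abar (c i) (c j) :=
  hbvm_rkn_butcher_entries_general s k P b c a ha abar habar X hX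
end
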